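/- arXiv:1701.04875 — 5 statements merged into one kernel-verified Lean document; each statement's English description precedes it below -/
import Mathlib

section
/- Let Ω ⊆ ℂ be a bounded domain (nonempty bounded connected open set) and let J ⊆ ∂Ω be a nonempty compact set without isolated points. Let S(Ω,J) be the set of all f ∈ R(Ω) such that f has infinite difference quotients at every point z₀ ∈ J along J. Then S(Ω,J) is either empty or a dense Gδ subset of R(Ω). -/
/-!
A rational function is Lipschitz at every point of a compact set avoiding its poles (its slope
at `z₀` is continuous there), so adding it to a function with infinite difference quotients
along `J` preserves that property. Hence if `f₀ ∈ S`, then `r + c • f₀ ∈ S` for every rational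
`r` and every `c ≠ 0`; letting `c → 0` shows that `S` is dense. Moreover `S` is the countable
intersection over `k, n` of the sets of `f` having at each `z₀ ∈ J` a chord to a point of `J`
of length `< 1/(n+1)` and slope `> k+1`, and each of these sets is open by compactness of `J`.
-/

open scoped Classical in
/-- Extend a continuous map on `E` to all of `ℂ` by zero. -/
noncomputable def extendFn (E : Set ℂ) (f : C(E, ℂ)) : ℂ → ℂ :=
  fun z => if h : z ∈ E then f ⟨z, h⟩ else 0

/-- `f` has infinite difference quotients at `z₀` along `J`:
`limsup_{z → z₀, z ∈ J \ {z₀}} |f z - f z₀| / |z - z₀| = +∞`. -/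
def HasInfDiffQuot (f : ℂ → ℂ) (J : Set ℂ) (z₀ : ℂ) : Prop :=
  ∀ M > (0:ℝ), ∀ δ > (0:ℝ), ∃ z ∈ J,
    0 < ‖z - z₀‖ ∧ ‖z - z₀‖ < δ ∧
      M * ‖z - z₀‖ < ‖f z - f z₀‖

/-- Restrictions to `E` of rational functions with poles off `E`. -/
def ratRestrict (E : Set ℂ) : Set C(E, ℂ) :=
  {f | ∃ p q : Polynomial ℂ, (∀ z ∈ E, q.eval z ≠ 0) ∧
    ∀ z : E, f z = p.eval (z : ℂ) / q.eval (z : ℂ)}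

lemma extendFn_of_mem {E : Set ℂ} (f : C(E, ℂ)) {z : ℂ} (hz : z ∈ E) :
    extendFn E f z = f ⟨z, hz⟩ :=
  dif_pos hz

lemma extendFn_add {E : Set ℂ} (f g : C(E, ℂ)) :
    extendFn E (f + g) = extendFn E f + extendFn E g := by
  funext z
  by_cases hz : z ∈ E <;> simp [extendFn, hz]

lemma extendFn_smul {E : Set ℂ} (c : ℂ) (f : C(E, ℂ)) :
    extendFn E (c • f) = c • extendFn E f := by
  funext z
  by_cases hz : z ∈ E <;> simp [extendFn, hz]

lemma add_smul_mem_ratRestrict {E : Set ℂ} {r f : C(E, ℂ)}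
    (hr : r ∈ ratRestrict E) (hf : f ∈ ratRestrict E) (c : ℂ) :
    r + c • f ∈ ratRestrict E := by
  obtain ⟨p₀, q₀, hq₀, hr⟩ := hr
  obtain ⟨p, q, hq, hf⟩ := hf
  refine ⟨p₀ * q + Polynomial.C c * p * q₀, q₀ * q,
    fun z hz => by simp [hq₀ z hz, hq z hz], fun z => ?_⟩
  have h₀ := hq₀ z z.2
  have h := hq z z.2
  simp only [ContinuousMap.add_apply, ContinuousMap.smul_apply, hr z, hf z, smul_eq_mul,
    Polynomial.eval_add, Polynomial.eval_mul, Polynomial.eval_C]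
  field_simp

lemma DifferentiableOn.exists_norm_sub_le_mul {𝕜 F : Type*} [NontriviallyNormedField 𝕜]
    [NormedAddCommGroup F] [NormedSpace 𝕜 F] {f : 𝕜 → F} {U E : Set 𝕜}
    (hf : DifferentiableOn 𝕜 f U) (hU : IsOpen U) (hE : IsCompact E) (hEU : E ⊆ U)
    {z₀ : 𝕜} (hz₀ : z₀ ∈ U) :
    ∃ L, ∀ z ∈ E, ‖f z - f z₀‖ ≤ L * ‖z - z₀‖ := by
  have hslope : ContinuousOn (dslope f z₀) U :=
    (continuousOn_dslope (hU.mem_nhds hz₀)).2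
      ⟨hf.continuousOn, hf.differentiableAt (hU.mem_nhds hz₀)⟩
  obtain ⟨L, hL⟩ := hE.exists_bound_of_continuousOn (hslope.mono hEU)
  refine ⟨L, fun z hz => ?_⟩
  rw [← sub_smul_dslope f z₀ z, norm_smul, mul_comm]
  gcongr
  exact hL z hz

lemma exists_norm_extendFn_sub_le_of_mem_ratRestrict {E : Set ℂ} (hE : IsCompact E)
    {r : C(E, ℂ)} (hr : r ∈ ratRestrict E) {z₀ : ℂ} (hz₀ : z₀ ∈ E) :
    ∃ L, ∀ z ∈ E, ‖extendFn E r z - extendFn E r z₀‖ ≤ L * ‖z - z₀‖ := by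
  obtain ⟨p, q, hq, hpq⟩ := hr
  have hdiff : DifferentiableOn ℂ (fun z => p.eval z / q.eval z) {z | q.eval z ≠ 0} :=
    fun z hz => (p.differentiableAt.div q.differentiableAt hz).differentiableWithinAt
  obtain ⟨L, hL⟩ := hdiff.exists_norm_sub_le_mul (isOpen_ne_fun q.continuous continuous_const)
    hE hq (hq z₀ hz₀)
  refine ⟨L, fun z hz => ?_⟩
  simpa only [extendFn_of_mem r hz, extendFn_of_mem r hz₀, hpq] using hL z hz

lemma HasInfDiffQuot.lipschitz_add_smul {f g : ℂ → ℂ} {J : Set ℂ} {z₀ : ℂ}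
    (hf : HasInfDiffQuot f J z₀) {L : ℝ} (hg : ∀ z ∈ J, ‖g z - g z₀‖ ≤ L * ‖z - z₀‖) {c : ℂ}
    (hc : c ≠ 0) :
    HasInfDiffQuot (g + c • f) J z₀ := by
  intro M hM δ hδ
  have hc' : 0 < ‖c‖ := norm_pos_iff.2 hc
  obtain ⟨z, hzJ, hpos, hlt, hsteep⟩ := hf ((M + |L|) / ‖c‖) (by positivity) δ hδ
  refine ⟨z, hzJ, hpos, hlt, ?_⟩
  have hgz : ‖g z - g z₀‖ ≤ |L| * ‖z - z₀‖ :=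
    (hg z hzJ).trans (by gcongr; exact le_abs_self L)
  calc M * ‖z - z₀‖ = ‖c‖ * ((M + |L|) / ‖c‖ * ‖z - z₀‖) - |L| * ‖z - z₀‖ := by
        field_simp; ring
    _ < ‖c • (f z - f z₀)‖ - ‖g z - g z₀‖ := by
        rw [norm_smul]; linarith [mul_lt_mul_of_pos_left hsteep hc']
    _ ≤ ‖(g z - g z₀) + c • (f z - f z₀)‖ := by
        have := norm_sub_le (g z - g z₀ + c • (f z - f z₀)) (g z - g z₀)
        rw [add_sub_cancel_left] at this
        linarith
    _ = ‖(g + c • f) z - (g + c • f) z₀‖ := by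
        simp only [Pi.add_apply, Pi.smul_apply, smul_sub]; abel_nf

def HasSteepChord (f : ℂ → ℂ) (J : Set ℂ) (K d : ℝ) (z₀ : ℂ) : Prop :=
  ∃ z ∈ J, 0 < ‖z - z₀‖ ∧ ‖z - z₀‖ < d ∧ K * ‖z - z₀‖ < ‖f z - f z₀‖

lemma HasSteepChord.mono {f : ℂ → ℂ} {J : Set ℂ} {K K' d d' : ℝ} {z₀ : ℂ}
    (h : HasSteepChord f J K d z₀) (hK : K' ≤ K) (hd : d ≤ d') :
    HasSteepChord f J K' d' z₀ := by
  obtain ⟨z, hzJ, hpos, hlt, hsteep⟩ := h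
  exact ⟨z, hzJ, hpos, hlt.trans_le hd,
    (mul_le_mul_of_nonneg_right hK hpos.le).trans_lt hsteep⟩

lemma hasInfDiffQuot_iff_forall_nat {f : ℂ → ℂ} {J : Set ℂ} {z₀ : ℂ} :
    HasInfDiffQuot f J z₀ ↔ ∀ k n : ℕ, HasSteepChord f J (k + 1) (1 / (n + 1)) z₀ := by
  refine ⟨fun h k n => h _ (by positivity) _ (by positivity), fun h M _ δ hδ => ?_⟩
  obtain ⟨k, hk⟩ := exists_nat_gt M
  obtain ⟨n, hn⟩ := exists_nat_one_div_lt hδ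
  exact (h k n).mono (by linarith) hn.le

open Filter Topology

/- Each steep chord at `w ∈ J` persists near `(f, w)` in `C(E, ℂ) × E` because evaluation is
jointly continuous; compactness of `J` turns this into a neighbourhood of `f` (tube lemma). -/
lemma isOpen_setOf_forall_hasSteepChord {E J : Set ℂ} (hE : IsCompact E) (hJE : J ⊆ E)
    (hJ : IsCompact J) (K d : ℝ) :
    IsOpen {f : C(E, ℂ) | ∀ z₀ ∈ J, HasSteepChord (extendFn E f) J K d z₀} := by
  have : CompactSpace E := isCompact_iff_compactSpace.mp hE
  have hJ' : IsCompact ((↑) ⁻¹' J : Set E) :=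
    hE.isClosed.isClosedEmbedding_subtypeVal.isCompact_preimage hJ
  rw [isOpen_iff_mem_nhds]
  intro f hf
  suffices ∀ᶠ g in 𝓝 f, ∀ w ∈ ((↑) ⁻¹' J : Set E), HasSteepChord (extendFn E g) J K d w by
    filter_upwards [this] with g hg z₀ hz₀ using hg ⟨z₀, hJE hz₀⟩ hz₀
  refine hJ'.eventually_forall_of_forall_eventually fun w hw => ?_
  obtain ⟨z, hzJ, hchord⟩ := hf w hw
  have hopen : IsOpen {p : C(E, ℂ) × E | 0 < ‖z - p.2‖ ∧ ‖z - p.2‖ < d ∧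
      K * ‖z - p.2‖ < ‖p.1 ⟨z, hJE hzJ⟩ - p.1 p.2‖} := by
    have hdist : Continuous fun p : C(E, ℂ) × E => ‖z - p.2‖ := by fun_prop
    have hrise : Continuous fun p : C(E, ℂ) × E => ‖p.1 ⟨z, hJE hzJ⟩ - p.1 p.2‖ := by fun_prop
    exact (isOpen_lt continuous_const hdist).inter ((isOpen_lt hdist continuous_const).inter
      (isOpen_lt (continuous_const.mul hdist) hrise))
  rw [extendFn_of_mem f (hJE hzJ), extendFn_of_mem f w.2] at hchord
  filter_upwards [hopen.mem_nhds hchord] with p hp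
  refine ⟨z, hzJ, ?_⟩
  rwa [extendFn_of_mem p.1 (hJE hzJ), extendFn_of_mem p.1 p.2.2]

def infDiffQuotFns (E J : Set ℂ) : Set C(E, ℂ) :=
  {f | ∀ z₀ ∈ J, HasInfDiffQuot (extendFn E f) J z₀}

lemma isGδ_infDiffQuotFns {E J : Set ℂ} (hE : IsCompact E) (hJE : J ⊆ E) (hJ : IsCompact J) :
    IsGδ (infDiffQuotFns E J) := by
  have : infDiffQuotFns E J = ⋂ (k : ℕ) (n : ℕ),
      {f : C(E, ℂ) | ∀ z₀ ∈ J, HasSteepChord (extendFn E f) J (k + 1) (1 / (n + 1)) z₀} := by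
    ext f
    simp only [infDiffQuotFns, hasInfDiffQuot_iff_forall_nat, Set.mem_ofPred_eq, Set.mem_iInter]
    exact ⟨fun h k n z₀ hz₀ => h z₀ hz₀ k n, fun h z₀ hz₀ k n => h k n z₀ hz₀⟩
  rw [this]
  exact .iInter fun k => .iInter fun n =>
    (isOpen_setOf_forall_hasSteepChord hE hJE hJ _ _).isGδ

lemma add_smul_mem_infDiffQuotFns {E J : Set ℂ} (hE : IsCompact E) (hJE : J ⊆ E)
    {r f : C(E, ℂ)} (hr : r ∈ ratRestrict E) (hf : f ∈ infDiffQuotFns E J) {c : ℂ}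
    (hc : c ≠ 0) : r + c • f ∈ infDiffQuotFns E J := by
  intro z₀ hz₀
  obtain ⟨L, hL⟩ := exists_norm_extendFn_sub_le_of_mem_ratRestrict hE hr (hJE hz₀)
  rw [extendFn_add, extendFn_smul]
  exact (hf z₀ hz₀).lipschitz_add_smul (fun z hz => hL z (hJE hz)) hc

theorem dichotomy_bounded_general (Ω : Set ℂ)
    (hΩbdd : Bornology.IsBounded Ω)
    (J : Set ℂ) (hJfr : J ⊆ frontier Ω) (hJcpt : IsCompact J) :
    let R : Set C(closure Ω, ℂ) := closure (ratRestrict (closure Ω))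
    let S : Set ↥R :=
      {f | ∀ z₀ ∈ J, HasInfDiffQuot (extendFn (closure Ω) f.1) J z₀}
    S = ∅ ∨ (Dense S ∧ IsGδ S) := by
  intro R S
  have hE : IsCompact (closure Ω) := hΩbdd.isCompact_closure
  have hJE : J ⊆ closure Ω := hJfr.trans frontier_subset_closure
  have hGδ : IsGδ S := (isGδ_infDiffQuotFns hE hJE hJcpt).preimage continuous_subtype_val
  rcases S.eq_empty_or_nonempty with hS | ⟨f₀, hf₀⟩
  · exact Or.inl hS
  refine Or.inr ⟨Subtype.dense_iff.2 (closure_minimal (fun r hr => ?_) isClosed_closure), hGδ⟩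
  have hlim : Tendsto (fun c : ℂ => r + c • f₀.1) (𝓝[≠] 0) (𝓝 r) :=
    (Continuous.tendsto' (by fun_prop) 0 r (by ext; simp)).mono_left nhdsWithin_le_nhds
  refine mem_closure_of_tendsto hlim (eventually_nhdsWithin_of_forall fun c hc =>
    ⟨⟨r + c • f₀.1, ?_⟩, add_smul_mem_infDiffQuotFns hE hJE hr hf₀ hc, rfl⟩)
  exact map_mem_closure (f := fun g => r + c • g) (by fun_prop) f₀.2
    fun f hf => add_smul_mem_ratRestrict hr hf c

/-- Let `Ω ⊆ ℂ` be a bounded domain and `J ⊆ ∂Ω` a nonempty compact set without isolated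
points.  Let `R(Ω)` be the closure in `C(cl Ω, ℂ)` (with the topology of uniform convergence,
which on the compact set `cl Ω` is the compact-open topology) of the restrictions of rational
functions with poles off `cl Ω`, and let `S(Ω, J)` be the set of `f ∈ R(Ω)` having infinite
difference quotients at every point of `J` along `J`.  Then `S(Ω, J)` is either empty or a
dense `Gδ` subset of `R(Ω)`. -/
theorem dichotomy_bounded (Ω : Set ℂ) (hΩopen : IsOpen Ω) (hΩconn : IsConnected Ω)
    (hΩbdd : Bornology.IsBounded Ω)
    (J : Set ℂ) (hJne : J.Nonempty) (hJfr : J ⊆ frontier Ω) (hJcpt : IsCompact J)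
    (hJperf : ∀ z ∈ J, z ∈ closure (J \ {z})) :
    let R : Set C(closure Ω, ℂ) := closure (ratRestrict (closure Ω))
    let S : Set ↥R :=
      {f | ∀ z₀ ∈ J, HasInfDiffQuot (extendFn (closure Ω) f.1) J z₀}
    S = ∅ ∨ (Dense S ∧ IsGδ S) :=
  dichotomy_bounded_general Ω hΩbdd J hJfr hJcpt
end

section
/- Let Ω ⊆ ℂ be an unbounded domain and suppose that for every positive integer n the compact set Kₙ = cl(Ω) ∩ {z : |z| ≤ n} is a set of approximation, i.e., A(Kₙ) = R(Kₙ). Then R̃(Ω) = A(cl(Ω)): a continuous function f : cl(Ω) → ℂ belongs to R̃(Ω) if and only if f is holomorphic on the interior of cl(Ω). -/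
/-- `A(E)`: the continuous functions on `E` that are holomorphic on the interior of `E`. -/
def holSet (E : Set ℂ) : Set C(E, ℂ) :=
  {f | DifferentiableOn ℂ (extendFn E f) (interior E)}

section Aux
open Filter Metric Polynomial Set

lemma extendFn_eq (E : Set ℂ) (f : C(E, ℂ)) {z : ℂ} (hz : z ∈ E) :
    extendFn E f z = f ⟨z, hz⟩ := by
  simp [extendFn, hz]

/-- Closure membership in the compact-open topology via uniform approximation on compacts. -/
lemma memClosureCO {X : Type*} [TopologicalSpace X] {f : C(X, ℂ)} {S : Set C(X, ℂ)} :
    f ∈ closure S ↔ ∀ (K : Set X), IsCompact K → ∀ ε : ℝ, 0 < ε →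
      ∃ g ∈ S, ∀ x ∈ K, dist (f x) (g x) < ε := by
  have hb := (Metric.uniformity_basis_dist (α := ℂ)).compactConvergenceUniformity (α := X)
  have hn := nhds_basis_uniformity' hb (x := f)
  rw [mem_closure_iff_nhds_basis hn]
  constructor
  · intro h K hK ε hε
    obtain ⟨g, hgS, hg⟩ := h (K, ε) ⟨hK, hε⟩
    exact ⟨g, hgS, hg⟩
  · rintro h ⟨K, ε⟩ ⟨hK, hε⟩
    obtain ⟨g, hgS, hg⟩ := h K hK ε hε
    exact ⟨g, hgS, hg⟩

/-- Rational restrictions are holomorphic. -/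
lemma ratRestrict_subset_holSet (E : Set ℂ) : ratRestrict E ⊆ holSet E := by
  rintro f ⟨p, q, hq, hfe⟩
  have hd : DifferentiableOn ℂ (fun z => p.eval z / q.eval z) (interior E) := by
    apply DifferentiableOn.div
    · exact (Polynomial.differentiable p).differentiableOn
    · exact (Polynomial.differentiable q).differentiableOn
    · exact fun z hz => hq z (interior_subset hz)
  refine hd.congr fun z hz => ?_
  rw [extendFn_eq E f (interior_subset hz), hfe]

/-- The closure of the rational restrictions lies in `A(E)` for closed `E`. -/
lemma closure_ratRestrict_subset (E : Set ℂ) (hE : IsClosed E) :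
    closure (ratRestrict E) ⊆ holSet E := by
  intro f hf
  intro z₀ hz₀
  obtain ⟨δ, hδ, hδsub⟩ := Metric.nhds_basis_closedBall.mem_iff.mp
    (isOpen_interior.mem_nhds hz₀)
  haveI hl : (nhds f ⊓ 𝓟 (ratRestrict E)).NeBot := mem_closure_iff_clusterPt.mp hf
  set l := nhds f ⊓ 𝓟 (ratRestrict E) with hldef
  have htend : Tendsto (id : C(E, ℂ) → C(E, ℂ)) l (nhds f) := tendsto_inf_left tendsto_id
  rw [ContinuousMap.tendsto_iff_forall_isCompact_tendstoUniformlyOn] at htend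
  have hcbE : Metric.closedBall z₀ δ ⊆ E := hδsub.trans interior_subset
  have hK' : IsCompact (Subtype.val ⁻¹' (Metric.closedBall z₀ δ) : Set E) := by
    rw [Topology.IsEmbedding.isCompact_iff (Topology.IsEmbedding.subtypeVal)]
    rw [Subtype.image_preimage_coe]
    exact (isCompact_closedBall z₀ δ).inter_left hE
  have htu : TendstoUniformlyOn (fun (g : C(E, ℂ)) z => extendFn E g z) (extendFn E f) l
      (Metric.closedBall z₀ δ) := by
    intro u hu
    filter_upwards [htend _ hK' u hu] with g hg z hz
    have hzE : z ∈ E := hcbE hz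
    rw [extendFn_eq E f hzE, extendFn_eq E g hzE]
    exact hg ⟨z, hzE⟩ hz
  have htlu : TendstoLocallyUniformlyOn (fun (g : C(E, ℂ)) z => extendFn E g z) (extendFn E f) l
      (Metric.ball z₀ δ) :=
    (htu.mono Metric.ball_subset_closedBall).tendstoLocallyUniformlyOn
  have hdiffev : ∀ᶠ g in l, DifferentiableOn ℂ (extendFn E g) (Metric.ball z₀ δ) := by
    have : ∀ᶠ g in l, g ∈ ratRestrict E :=
      eventually_inf_principal.mpr (Eventually.of_forall fun g hg => hg)
    filter_upwards [this] with g hg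
    exact (ratRestrict_subset_holSet E hg).mono
      ((Metric.ball_subset_closedBall.trans hδsub))
  have hdiff := htlu.differentiableOn hdiffev Metric.isOpen_ball
  exact ((hdiff z₀ (Metric.mem_ball_self hδ)).differentiableAt
    (Metric.isOpen_ball.mem_nhds (Metric.mem_ball_self hδ))).differentiableWithinAt

end Aux

/-- Let `Ω ⊆ ℂ` be an unbounded domain such that for every `n ≥ 1` the compact set
`Kₙ = cl Ω ∩ {|z| ≤ n}` is a set of approximation, i.e. `A(Kₙ) = R(Kₙ)` (the closure being
taken in `C(Kₙ, ℂ)`, whose compact-open topology is the supremum-norm topology since `Kₙ` is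
compact).  Then `R̃(Ω) = A(cl Ω)`: the closure of the rational restrictions in `C(cl Ω, ℂ)`,
with the topology of uniform convergence on compact subsets of `cl Ω`, is exactly the set of
continuous functions on `cl Ω` that are holomorphic on the interior of `cl Ω`. -/
theorem Rtilde_eq_A (Ω : Set ℂ) (hΩopen : IsOpen Ω) (hΩconn : IsConnected Ω)
    (hΩunbdd : ¬ Bornology.IsBounded Ω)
    (happrox : ∀ n : ℕ, 0 < n →
      holSet (closure Ω ∩ Metric.closedBall 0 (n : ℝ)) =
        closure (ratRestrict (closure Ω ∩ Metric.closedBall 0 (n : ℝ)))) :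
    closure (ratRestrict (closure Ω)) = holSet (closure Ω) := by
  classical
  apply Set.Subset.antisymm (closure_ratRestrict_subset _ isClosed_closure)
  -- hard direction
  intro f hf
  rw [memClosureCO]
  intro K hK ε hε
  obtain ⟨z₀, hz₀Ω⟩ := hΩconn.nonempty
  have hz₀ : z₀ ∈ closure Ω := subset_closure hz₀Ω
  -- choose n
  obtain ⟨R, hR⟩ := (hK.image continuous_subtype_val).isBounded.subset_closedBall 0
  obtain ⟨n, hn⟩ := exists_nat_ge (max (max R ‖z₀‖) 1)
  have hn1 : (1 : ℝ) ≤ n := le_trans (le_max_right _ _) hn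
  have hnR : R ≤ n := le_trans ((le_max_left _ _).trans (le_max_left _ _)) hn
  have hnz₀ : ‖z₀‖ ≤ n := le_trans ((le_max_right _ _).trans (le_max_left _ _)) hn
  have hn0 : 0 < n := by exact_mod_cast lt_of_lt_of_le zero_lt_one (by exact_mod_cast hn1)
  set Kn := closure Ω ∩ Metric.closedBall 0 (n : ℝ) with hKndef
  have hKnc : IsCompact Kn := (isCompact_closedBall 0 _).inter_left isClosed_closure
  have hsub : Kn ⊆ closure Ω := Set.inter_subset_left
  have hz₀Kn : z₀ ∈ Kn := ⟨hz₀, by simpa [Metric.mem_closedBall, dist_zero_right] using hnz₀⟩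
  -- restrict f
  set ι : C(Kn, closure Ω) := ⟨Set.inclusion hsub, continuous_inclusion hsub⟩ with hιdef
  set f' : C(Kn, ℂ) := f.comp ι with hf'def
  have hf' : f' ∈ holSet Kn := by
    have hmono : interior Kn ⊆ interior (closure Ω) := interior_mono hsub
    refine (DifferentiableOn.mono hf hmono).congr fun z hz => ?_
    have hzKn : z ∈ Kn := interior_subset hz
    rw [extendFn_eq Kn f' hzKn, extendFn_eq (closure Ω) f (hsub hzKn)]
    rfl
  rw [happrox n hn0] at hf'
  haveI : CompactSpace ↥Kn := isCompact_iff_compactSpace.mp hKnc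
  rw [memClosureCO] at hf'
  obtain ⟨g, ⟨p, q, hq, hgev⟩, hgclose⟩ := hf' Set.univ isCompact_univ (ε/2) (by linarith)
  have hclose : ∀ z (hz : z ∈ Kn), dist (f ⟨z, hsub hz⟩) (p.eval z / q.eval z) < ε/2 := by
    intro z hz
    have := hgclose ⟨z, hz⟩ (Set.mem_univ _)
    rwa [hgev ⟨z, hz⟩] at this
  -- q ≠ 0
  have hq0 : q ≠ 0 := by
    intro h
    exact hq z₀ hz₀Kn (by simp [h])
  -- factor q
  have hcard : Multiset.card q.roots = q.natDegree :=
    (Polynomial.splits_iff_card_roots).mp (IsAlgClosed.splits q)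
  have hfact := Polynomial.C_leadingCoeff_mul_prod_multiset_X_sub_C hcard
  set s1 := q.roots.filter (fun a => a ∈ closure Ω) with hs1def
  set s2 := q.roots.filter (fun a => ¬ a ∈ closure Ω) with hs2def
  set q1 : Polynomial ℂ := (s1.map fun a => Polynomial.X - Polynomial.C a).prod with hq1def
  set q2 : Polynomial ℂ := Polynomial.C q.leadingCoeff * (s2.map fun a => Polynomial.X - Polynomial.C a).prod with hq2def
  have hq12 : q = q1 * q2 := by
    have hsplit : s1 + s2 = q.roots := Multiset.filter_add_not _ _
    calc q = Polynomial.C q.leadingCoeff * (q.roots.map fun a => Polynomial.X - Polynomial.C a).prod := hfact.symm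
    _ = Polynomial.C q.leadingCoeff * ((s1 + s2).map fun a => Polynomial.X - Polynomial.C a).prod := by rw [hsplit]
    _ = q1 * q2 := by
        rw [Multiset.map_add, Multiset.prod_add, hq1def, hq2def]; ring
  have heval1 : ∀ z : ℂ, q1.eval z = (s1.map fun a => z - a).prod := by
    intro z
    rw [hq1def, Polynomial.eval_multiset_prod, Multiset.map_map]
    congr 1
    apply Multiset.map_congr rfl
    intro a _
    simp
  have heval2 : ∀ z : ℂ, q2.eval z = q.leadingCoeff * (s2.map fun a => z - a).prod := by
    intro z
    rw [hq2def, Polynomial.eval_mul, Polynomial.eval_C, Polynomial.eval_multiset_prod,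
      Multiset.map_map]
    congr 2
    apply Multiset.map_congr rfl
    intro a _
    simp
  -- q2 nonvanishing on closure Ω
  have hq2E : ∀ z ∈ closure Ω, q2.eval z ≠ 0 := by
    intro z hz
    rw [heval2]
    apply mul_ne_zero (Polynomial.leadingCoeff_ne_zero.mpr hq0)
    rw [Ne, Multiset.prod_eq_zero_iff]
    rintro hmem
    obtain ⟨a, ha, ha0⟩ := Multiset.mem_map.mp hmem
    have ha' : ¬ a ∈ closure Ω := (Multiset.mem_filter.mp ha).2
    rw [sub_eq_zero] at ha0
    exact ha' (ha0 ▸ hz)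
  -- roots in s1 have norm > n
  have hroots1 : ∀ a ∈ s1, (n : ℝ) < ‖a‖ := by
    intro a ha
    obtain ⟨haroot, haE⟩ := Multiset.mem_filter.mp ha
    have haq : q.eval a = 0 := ((Polynomial.mem_roots hq0).mp haroot)
    by_contra h
    push_neg at h
    exact hq a ⟨haE, by simpa [Metric.mem_closedBall, dist_zero_right] using h⟩ haq
  -- define r
  set F : Finset ℝ := insert ((n : ℝ) + 1) (s1.toFinset.image fun a => ‖a‖) with hFdef
  have hFne : F.Nonempty := ⟨_, Finset.mem_insert_self _ _⟩
  set r : ℝ := F.min' hFne with hrdef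
  have hnr : (n : ℝ) < r := by
    rw [hrdef, Finset.lt_min'_iff]
    intro y hy
    rcases Finset.mem_insert.mp hy with h | h
    · rw [h]; linarith
    · obtain ⟨a, ha, rfl⟩ := Finset.mem_image.mp h
      exact hroots1 a (Multiset.mem_toFinset.mp ha)
  have hra : ∀ a ∈ s1, r ≤ ‖a‖ := by
    intro a ha
    exact Finset.min'_le _ _ (Finset.mem_insert_of_mem
      (Finset.mem_image_of_mem _ (Multiset.mem_toFinset.mpr ha)))
  have hq1ne : ∀ z : ℂ, ‖z‖ < r → q1.eval z ≠ 0 := by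
    intro z hzr
    rw [heval1, Ne, Multiset.prod_eq_zero_iff]
    intro hmem
    obtain ⟨a, ha, ha0⟩ := Multiset.mem_map.mp hmem
    rw [sub_eq_zero] at ha0
    rw [ha0] at hzr
    exact absurd (hra a ha) (not_le.mpr hzr)
  -- power series approximation of 1/q1
  set g0 : ℂ → ℂ := fun z => (q1.eval z)⁻¹ with hg0def
  set u : ℝ := r - n with hudef
  have hu : 0 < u := by rw [hudef]; linarith
  set R2 : ℝ := n + 2 * u / 3 with hR2def
  set r2 : ℝ := n + u / 3 with hr2def
  have hn0' : (0:ℝ) < n := by exact_mod_cast hn0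
  have hR2pos : 0 < R2 := by rw [hR2def]; linarith
  have hr2pos : 0 < r2 := by rw [hr2def]; linarith
  have hR2r : R2 < r := by rw [hR2def, hudef]; linarith
  have hr2R2 : r2 < R2 := by rw [hr2def, hR2def]; linarith
  have hnr2 : (n:ℝ) < r2 := by rw [hr2def]; linarith
  have hdiffg0 : DifferentiableOn ℂ g0 (Metric.closedBall 0 R2.toNNReal) := by
    apply DifferentiableOn.inv ((Polynomial.differentiable q1).differentiableOn)
    intro z hz
    apply hq1ne
    have : ‖z‖ ≤ R2 := by
      have := Metric.mem_closedBall.mp hz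
      rwa [dist_zero_right, Real.coe_toNNReal _ hR2pos.le] at this
    linarith
  have hps := hdiffg0.hasFPowerSeriesOnBall (by
    rw [← Real.toNNReal_pos] at hR2pos; exact hR2pos)
  have hlt : ((r2.toNNReal : NNReal) : ENNReal) < (R2.toNNReal : ENNReal) := by
    rw [ENNReal.coe_lt_coe]
    exact (Real.toNNReal_lt_toNNReal_iff hR2pos).mpr hr2R2
  have htu := hps.tendstoUniformlyOn' hlt
  -- bound M
  obtain ⟨M, hM⟩ := hKnc.exists_bound_of_continuousOn (f := fun z => p.eval z / q2.eval z)
    (ContinuousOn.div (Polynomial.continuous p).continuousOn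
      (Polynomial.continuous q2).continuousOn (fun z hz => hq2E z (hsub hz)))
  set M' : ℝ := max M 0 with hM'def
  have hM'0 : 0 ≤ M' := le_max_right _ _
  set δ : ℝ := ε / (2 * (M' + 1)) with hδdef
  have hδpos : 0 < δ := by
    rw [hδdef]; positivity
  rw [Metric.tendstoUniformlyOn_iff] at htu
  obtain ⟨N, hN⟩ := (htu δ hδpos).exists
  set P := cauchyPowerSeries g0 0 R2.toNNReal with hPdef
  set T : Polynomial ℂ := ∑ k ∈ Finset.range N, Polynomial.C (P.coeff k) * Polynomial.X ^ k with hTdef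
  have hTeval : ∀ y : ℂ, T.eval y = P.partialSum N y := by
    intro y
    rw [hTdef, Polynomial.eval_finset_sum, FormalMultilinearSeries.partialSum]
    apply Finset.sum_congr rfl
    intro k _
    rw [FormalMultilinearSeries.apply_eq_pow_smul_coeff, smul_eq_mul,
      Polynomial.eval_mul, Polynomial.eval_C, Polynomial.eval_pow, Polynomial.eval_X, mul_comm]
  -- the approximant
  have hcont : Continuous fun x : ↥(closure Ω) => (p * T).eval (x : ℂ) / q2.eval (x : ℂ) := by
    apply Continuous.div
    · exact (Polynomial.continuous (p * T)).comp continuous_subtype_val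
    · exact (Polynomial.continuous q2).comp continuous_subtype_val
    · exact fun x => hq2E x x.2
  refine ⟨⟨_, hcont⟩, ⟨p * T, q2, hq2E, fun z => rfl⟩, ?_⟩
  intro x hxK
  set z : ℂ := (x : ℂ) with hzdef
  have hzE : z ∈ closure Ω := x.2
  have hzn : ‖z‖ ≤ n := by
    have : z ∈ Metric.closedBall (0:ℂ) R := hR ⟨x, hxK, rfl⟩
    rw [Metric.mem_closedBall, dist_zero_right] at this
    linarith
  have hzKn : z ∈ Kn := ⟨hzE, by simpa [Metric.mem_closedBall, dist_zero_right] using hzn⟩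
  have hfx : f x = f ⟨z, hsub hzKn⟩ := rfl
  -- second term computation
  have hq1z : q1.eval z ≠ 0 := hq1ne z (by linarith)
  have hsplitz : p.eval z / q.eval z = (p.eval z / q2.eval z) * g0 z := by
    rw [hq12, Polynomial.eval_mul, hg0def]
    rw [mul_comm (q1.eval z) (q2.eval z), ← div_div, div_eq_mul_inv]
  have hGx : (p * T).eval z / q2.eval z = (p.eval z / q2.eval z) * T.eval z := by
    rw [Polynomial.eval_mul, mul_div_right_comm]
  have hzball : z ∈ Metric.ball (0:ℂ) (r2.toNNReal : ℝ) := by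
    rw [Metric.mem_ball, dist_zero_right, Real.coe_toNNReal _ hr2pos.le]
    linarith
  have hTz : dist (g0 z) (T.eval z) < δ := by
    have h := hN z hzball
    rw [hTeval]
    rw [sub_zero] at h
    exact h
  have hd2 : dist (p.eval z / q.eval z) ((p * T).eval z / q2.eval z) < ε / 2 := by
    rw [hsplitz, hGx, dist_eq_norm, ← mul_sub, norm_mul]
    have hb1 : ‖p.eval z / q2.eval z‖ ≤ M' := le_trans (hM z hzKn) (le_max_left _ _)
    have hb2 : ‖g0 z - T.eval z‖ < δ := by rwa [← dist_eq_norm]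
    calc ‖p.eval z / q2.eval z‖ * ‖g0 z - T.eval z‖ ≤ M' * δ := by
          apply mul_le_mul hb1 hb2.le (norm_nonneg _) hM'0
    _ < (M' + 1) * δ := by
          apply mul_lt_mul_of_pos_right (by linarith) hδpos
    _ = ε / 2 := by rw [hδdef]; field_simp
  calc dist (f x) ((p * T).eval z / q2.eval z)
      ≤ dist (f x) (p.eval z / q.eval z) + dist (p.eval z / q.eval z)
        ((p * T).eval z / q2.eval z) := dist_triangle _ _ _
    _ < ε / 2 + ε / 2 := by
        apply add_lt_add _ hd2
        rw [hfx]
        exact hclose z hzKn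
    _ = ε := by ring
end

section
/- Let a ∈ (0,1), let b be an odd positive integer with a·b > 1 + 3π/2, and define g(z) = Σ_{n=0}^{∞} aⁿ z^{bⁿ} for |z| ≤ 1. Then g is continuous on the closed unit disc, holomorphic on the open unit disc D = {z : |z| < 1}, and g has infinite difference quotients at every point z₀ of the unit circle 𝕋 = {z : |z| = 1} along 𝕋. -/
/-!
Split `g z - g z₀` into the head `n < m` and the tail `n ≥ m`, and put `N = b ^ m`. Take for `z`
a `2N`-th root of unity `exp (iπj/N)` within arc length `3π/(2N)` of `z₀`, with `j` chosen so that
`u = z ^ N = ±1` and `w = z₀ ^ N` satisfy `Re (u w) ≤ 0`. As `b` is odd, `z ^ (b ^ n) = u` for all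
`n ≥ m`, so the tail is `u aᵐ ∑ₖ aᵏ (1 - (u w) ^ (b ^ k))`: every term has nonnegative real part and
the `k = 0` term has real part at least `1`, so the tail has norm at least `aᵐ`. Since
`z ↦ z ^ (b ^ n)` is `bⁿ`-Lipschitz on the disc, the head is at most
`∑_{n<m} (ab)ⁿ |z - z₀| ≤ (3π/2) aᵐ / (ab - 1)`. Hence `|g z - g z₀| ≥ C aᵐ` with
`C = 1 - (3π/2)/(ab - 1) > 0` while `|z - z₀| ≤ 3π/(2bᵐ)`, a difference quotient of order `(ab)ᵐ`.
-/

open Complex Finset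
open scoped Real

lemma norm_pow_sub_pow_le_mul_norm_sub {R : Type*} [NormedRing R] [NormOneClass R] {x y : R}
    (hx : ‖x‖ ≤ 1) (hy : ‖y‖ ≤ 1) (n : ℕ) : ‖x ^ n - y ^ n‖ ≤ n * ‖x - y‖ := by
  induction n with
  | zero => simp
  | succ n ih =>
    have hxn : ‖x ^ n‖ ≤ 1 := (norm_pow_le x n).trans (pow_le_one₀ (norm_nonneg x) hx)
    calc ‖x ^ (n + 1) - y ^ (n + 1)‖ = ‖x ^ n * (x - y) + (x ^ n - y ^ n) * y‖ := by
          rw [pow_succ, pow_succ]; noncomm_ring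
      _ ≤ ‖x ^ n‖ * ‖x - y‖ + ‖x ^ n - y ^ n‖ * ‖y‖ :=
          (norm_add_le _ _).trans (add_le_add (norm_mul_le _ _) (norm_mul_le _ _))
      _ ≤ 1 * ‖x - y‖ + n * ‖x - y‖ * 1 := by gcongr
      _ = (n + 1 : ℕ) * ‖x - y‖ := by push_cast; ring

lemma norm_exp_mul_I_sub_exp_mul_I_le (x y : ℝ) :
    ‖exp (x * I) - exp (y * I)‖ ≤ |x - y| := by
  have h : exp (x * I) - exp (y * I) = exp (y * I) * (exp (I * (x - y : ℝ)) - 1) := by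
    rw [mul_sub, ← Complex.exp_add]; push_cast; ring_nf
  rw [h, norm_mul, norm_exp_ofReal_mul_I, one_mul, ← Real.norm_eq_abs]
  exact Real.norm_exp_I_mul_ofReal_sub_one_le

lemma exists_int_mul_pi_sub_mem_Icc (φ : ℝ) :
    ∃ j : ℤ, j * π - φ ∈ Set.Icc (π / 2) (3 * π / 2) := by
  set j := ⌈φ / π + 1 / 2⌉
  have hπ := Real.pi_pos
  have hj : φ / π + 1 / 2 ≤ j := Int.le_ceil _
  have hj' : (j : ℝ) < φ / π + 1 / 2 + 1 := Int.ceil_lt_add_one _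
  have hφ : φ / π * π = φ := div_mul_cancel₀ φ hπ.ne'
  refine ⟨j, ?_, ?_⟩ <;> nlinarith

lemma exists_near_pow_sq_eq_one {z₀ : ℂ} (hz₀ : ‖z₀‖ = 1) {N : ℕ} (hN : 0 < N) :
    ∃ z : ℂ, ‖z‖ = 1 ∧ ‖z - z₀‖ ≤ 3 * π / 2 / N ∧ (z ^ N) ^ 2 = 1 ∧
      (z ^ N * z₀ ^ N).re ≤ 0 := by
  set θ₀ := arg z₀
  have hθ₀ : exp (θ₀ * I) = z₀ := by simpa [hz₀] using norm_mul_exp_arg_mul_I z₀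
  have hN' : (0 : ℝ) < N := by exact_mod_cast hN
  have hpow (x : ℝ) : exp (x * I) ^ N = exp ((N * x : ℝ) * I) := by
    rw [← Complex.exp_nat_mul]; push_cast; ring_nf
  obtain ⟨j, hj₁, hj₂⟩ := exists_int_mul_pi_sub_mem_Icc (N * θ₀)
  refine ⟨exp ((j * π / N : ℝ) * I), norm_exp_ofReal_mul_I _, ?_, ?_, ?_⟩
  · rw [← hθ₀]
    refine (norm_exp_mul_I_sub_exp_mul_I_le _ _).trans ?_
    have hdist : j * π / N - θ₀ = (j * π - N * θ₀) / N := by field_simp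
    rw [hdist, abs_of_nonneg (div_nonneg (by linarith) hN'.le)]
    gcongr
  · have hNC : (N : ℂ) ≠ 0 := by exact_mod_cast hN.ne'
    rw [hpow, ← Complex.exp_nat_mul, ← exp_int_mul_two_pi_mul_I j]
    congr 1
    push_cast
    field_simp
  · rw [← hθ₀, hpow, hpow, ← Complex.exp_add, ← add_mul, ← ofReal_add, exp_ofReal_mul_I_re,
      show N * (j * π / N) + N * θ₀ = j * (2 * π) - (j * π - N * θ₀) by
        field_simp; ring, Real.cos_int_mul_two_pi_sub]
    exact Real.cos_nonpos_of_pi_div_two_le_of_le hj₁ (by linarith)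

noncomputable def weierstrassSeries (c : ℂ) (b : ℕ) (z : ℂ) : ℂ := ∑' n : ℕ, c ^ n * z ^ b ^ n

section WeierstrassSeries

variable (b : ℕ) {c : ℂ}

lemma norm_mul_pow_pow_le (n : ℕ) {z : ℂ} (hz : ‖z‖ ≤ 1) :
    ‖c ^ n * z ^ b ^ n‖ ≤ ‖c‖ ^ n := by
  rw [norm_mul, norm_pow, norm_pow]
  exact mul_le_of_le_one_right (by positivity) (pow_le_one₀ (norm_nonneg z) hz)

lemma summable_weierstrassSeries (hc : ‖c‖ < 1) {z : ℂ} (hz : ‖z‖ ≤ 1) :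
    Summable fun n : ℕ => c ^ n * z ^ b ^ n :=
  .of_norm_bounded (summable_geometric_of_lt_one (norm_nonneg c) hc)
    fun n => norm_mul_pow_pow_le b n hz

lemma continuousOn_weierstrassSeries (hc : ‖c‖ < 1) :
    ContinuousOn (weierstrassSeries c b) (Metric.closedBall 0 1) :=
  continuousOn_tsum (fun _ => (continuous_const.mul (continuous_pow _)).continuousOn)
    (summable_geometric_of_lt_one (norm_nonneg c) hc)
    fun n _ hz => norm_mul_pow_pow_le b n (mem_closedBall_zero_iff.mp hz)

lemma differentiableOn_weierstrassSeries (hc : ‖c‖ < 1) :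
    DifferentiableOn ℂ (weierstrassSeries c b) (Metric.ball 0 1) :=
  differentiableOn_tsum_of_summable_norm (summable_geometric_of_lt_one (norm_nonneg c) hc)
    (fun _ => ((differentiable_const _).mul (differentiable_pow _)).differentiableOn)
    Metric.isOpen_ball fun n _ hz => norm_mul_pow_pow_le b n (mem_ball_zero_iff.mp hz).le

lemma weierstrassSeries_sub (hc : ‖c‖ < 1) (m : ℕ) {z w : ℂ} (hz : ‖z‖ ≤ 1) (hw : ‖w‖ ≤ 1) :
    weierstrassSeries c b z - weierstrassSeries c b w =
      ∑ n ∈ range m, c ^ n * (z ^ b ^ n - w ^ b ^ n) +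
        c ^ m * ∑' k : ℕ, c ^ k * ((z ^ b ^ m) ^ b ^ k - (w ^ b ^ m) ^ b ^ k) := by
  have hz' := summable_weierstrassSeries b hc hz
  have hw' := summable_weierstrassSeries b hc hw
  rw [weierstrassSeries, weierstrassSeries, ← hz'.tsum_sub hw', ← tsum_mul_left,
    ← (hz'.sub hw').sum_add_tsum_nat_add m]
  congr 1
  · exact sum_congr rfl fun n _ => by ring
  · refine tsum_congr fun k => ?_
    rw [← pow_mul, ← pow_mul, ← pow_add, add_comm m k]
    ring

lemma norm_sum_range_mul_pow_sub_pow_le (m : ℕ) {z w : ℂ} (hz : ‖z‖ ≤ 1)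
    (hw : ‖w‖ ≤ 1) :
    ‖∑ n ∈ range m, c ^ n * (z ^ b ^ n - w ^ b ^ n)‖ ≤
      (∑ n ∈ range m, (‖c‖ * b) ^ n) * ‖z - w‖ := by
  rw [sum_mul]
  refine (norm_sum_le _ _).trans (sum_le_sum fun n _ => ?_)
  calc ‖c ^ n * (z ^ b ^ n - w ^ b ^ n)‖ ≤ ‖c‖ ^ n * ((b ^ n : ℕ) * ‖z - w‖) := by
        rw [norm_mul, norm_pow]
        gcongr
        exact norm_pow_sub_pow_le_mul_norm_sub hz hw _
    _ = (‖c‖ * b) ^ n * ‖z - w‖ := by push_cast; ring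

end WeierstrassSeries

lemma one_le_norm_tsum_mul_one_sub_pow {a : ℝ} (ha₀ : 0 ≤ a) (ha₁ : a < 1) (b : ℕ) {v : ℂ}
    (hv : ‖v‖ ≤ 1) (hv_re : v.re ≤ 0) :
    1 ≤ ‖∑' k : ℕ, (a : ℂ) ^ k * (1 - v ^ b ^ k)‖ := by
  have hterm (k : ℕ) : ((a : ℂ) ^ k * (1 - v ^ b ^ k)).re = a ^ k * (1 - (v ^ b ^ k).re) := by
    rw [← ofReal_pow, re_ofReal_mul, sub_re, one_re]
  have hre_le (k : ℕ) : (v ^ b ^ k).re ≤ 1 :=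
    (re_le_norm _).trans (by rw [norm_pow]; exact pow_le_one₀ (norm_nonneg v) hv)
  have hsum : Summable fun k : ℕ => (a : ℂ) ^ k * (1 - v ^ b ^ k) := by
    refine .of_norm_bounded ((summable_geometric_of_lt_one ha₀ ha₁).mul_left 2) fun k => ?_
    rw [norm_mul, norm_pow, norm_real, Real.norm_of_nonneg ha₀, mul_comm 2]
    gcongr
    calc ‖1 - v ^ b ^ k‖ ≤ ‖(1 : ℂ)‖ + ‖v ^ b ^ k‖ := norm_sub_le _ _
      _ ≤ 2 := by rw [norm_one, norm_pow]; linarith [pow_le_one₀ (norm_nonneg v) hv (n := b ^ k)]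
  have hfirst : 1 ≤ (∑' k : ℕ, (a : ℂ) ^ k * (1 - v ^ b ^ k)).re := by
    refine le_trans ?_ (le_hasSum (hasSum_re hsum.hasSum) 0 fun k _ => ?_)
    · simpa [hterm] using hv_re
    · rw [hterm]
      exact mul_nonneg (pow_nonneg ha₀ k) (sub_nonneg.mpr (hre_le k))
  exact hfirst.trans (re_le_norm _)

lemma pow_sub_pow_eq_mul_one_sub_mul_pow {u : ℂ} (hu : u ^ 2 = 1) {p : ℕ} (hp : Odd p) (w : ℂ) :
    u ^ p - w ^ p = u * (1 - (u * w) ^ p) := by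
  obtain ⟨q, rfl⟩ := hp
  have hup : u ^ (2 * q + 1) = u := by rw [pow_succ, pow_mul, hu, one_pow, one_mul]
  rw [mul_pow, hup, mul_sub, mul_one, ← mul_assoc, ← sq, hu, one_mul]

lemma one_le_norm_tsum_mul_pow_sub_pow {a : ℝ} (ha₀ : 0 ≤ a) (ha₁ : a < 1) {b : ℕ} (hb : Odd b)
    {u w : ℂ} (hu : u ^ 2 = 1) (hw : ‖w‖ ≤ 1) (huw : (u * w).re ≤ 0) :
    1 ≤ ‖∑' k : ℕ, (a : ℂ) ^ k * (u ^ b ^ k - w ^ b ^ k)‖ := by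
  have hu_norm : ‖u‖ = 1 :=
    (pow_eq_one_iff_of_nonneg (norm_nonneg u) two_ne_zero).mp (by rw [← norm_pow, hu, norm_one])
  have huw_norm : ‖u * w‖ ≤ 1 := by rwa [norm_mul, hu_norm, one_mul]
  simp_rw [pow_sub_pow_eq_mul_one_sub_mul_pow hu (hb.pow : Odd (b ^ _)), mul_left_comm _ u,
    tsum_mul_left, norm_mul, hu_norm, one_mul]
  exact one_le_norm_tsum_mul_one_sub_pow ha₀ ha₁ b huw_norm huw

lemma exists_near_norm_weierstrassSeries_sub_ge {a : ℝ} (ha₀ : 0 < a) (ha₁ : a < 1) {b : ℕ}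
    (hb : Odd b) (hab : 1 < a * b) {z₀ : ℂ} (hz₀ : ‖z₀‖ = 1) (m : ℕ) :
    ∃ z ∈ Metric.sphere (0 : ℂ) 1, z ≠ z₀ ∧ ‖z - z₀‖ ≤ 3 * π / 2 / (b : ℝ) ^ m ∧
      (1 - 3 * π / 2 / (a * b - 1)) * a ^ m ≤
        ‖weierstrassSeries a b z - weierstrassSeries a b z₀‖ := by
  obtain ⟨z, hz, hzz₀, hu, hre⟩ := exists_near_pow_sq_eq_one hz₀ (pow_pos hb.pos m)
  rw [Nat.cast_pow] at hzz₀
  have hc : ‖(a : ℂ)‖ < 1 := by rwa [norm_real, Real.norm_of_nonneg ha₀.le]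
  refine ⟨z, mem_sphere_zero_iff_norm.mpr hz, ?_, hzz₀, ?_⟩
  · rintro rfl
    rw [← sq, hu, one_re] at hre
    norm_num at hre
  rw [weierstrassSeries_sub b hc m hz.le hz₀.le]
  set H := ∑ n ∈ range m, (a : ℂ) ^ n * (z ^ b ^ n - z₀ ^ b ^ n)
  set T := ∑' k : ℕ, (a : ℂ) ^ k * ((z ^ b ^ m) ^ b ^ k - (z₀ ^ b ^ m) ^ b ^ k)
  have hT : 1 ≤ ‖T‖ :=
    one_le_norm_tsum_mul_pow_sub_pow ha₀.le ha₁ hb hu (by rw [norm_pow, hz₀, one_pow]) hre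
  have hgeom : ∑ n ∈ range m, (‖(a : ℂ)‖ * b) ^ n ≤ (a * b) ^ m / (a * b - 1) := by
    rw [norm_real, Real.norm_of_nonneg ha₀.le, geom_sum_eq hab.ne']
    exact div_le_div_of_nonneg_right (sub_le_self _ zero_le_one) (by linarith)
  have hH : ‖H‖ ≤ (a * b) ^ m / (a * b - 1) * (3 * π / 2 / (b : ℝ) ^ m) :=
    (norm_sum_range_mul_pow_sub_pow_le b m hz.le hz₀.le).trans
      (mul_le_mul hgeom hzz₀ (norm_nonneg _)
        (div_nonneg (pow_nonneg (by linarith) m) (by linarith)))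
  have haT : a ^ m ≤ ‖(a : ℂ) ^ m * T‖ := by
    rw [norm_mul, norm_pow, norm_real, Real.norm_of_nonneg ha₀.le]
    exact le_mul_of_one_le_right (by positivity) hT
  have hsplit : ‖(a : ℂ) ^ m * T‖ ≤ ‖H + (a : ℂ) ^ m * T‖ + ‖H‖ := by
    simpa using norm_sub_le (H + (a : ℂ) ^ m * T) H
  have hb₀ : (b : ℝ) ^ m ≠ 0 := pow_ne_zero m (Nat.cast_ne_zero.mpr hb.pos.ne')
  have hab₁ : a * b - 1 ≠ 0 := by linarith
  have hconst : (1 - 3 * π / 2 / (a * b - 1)) * a ^ m =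
      a ^ m - (a * b) ^ m / (a * b - 1) * (3 * π / 2 / (b : ℝ) ^ m) := by
    rw [mul_pow]
    field_simp
  linarith

lemma hasInfDiffQuot_of_geometric {f : ℂ → ℂ} {J : Set ℂ} {z₀ : ℂ} {a b C K : ℝ} (hb : 1 < b)
    (hab : 1 < a * b) (hC : 0 < C)
    (h : ∀ m : ℕ, ∃ z ∈ J, z ≠ z₀ ∧ ‖z - z₀‖ ≤ K / b ^ m ∧ C * a ^ m ≤ ‖f z - f z₀‖) :
    HasInfDiffQuot f J z₀ := by
  intro M hM δ hδ
  obtain ⟨m, hm_dist, hm_ratio⟩ :=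
    (((tendsto_pow_atTop_atTop_of_one_lt hb).eventually_gt_atTop (K / δ)).and
      ((tendsto_pow_atTop_atTop_of_one_lt hab).eventually_gt_atTop (M * K / C))).exists
  obtain ⟨z, hzJ, hne, hdist, hval⟩ := h m
  have hbm : 0 < b ^ m := pow_pos (by linarith) m
  rw [div_lt_iff₀ hδ] at hm_dist
  rw [div_lt_iff₀ hC, mul_pow] at hm_ratio
  refine ⟨z, hzJ, norm_pos_iff.mpr (sub_ne_zero.mpr hne), ?_, ?_⟩
  · calc ‖z - z₀‖ ≤ K / b ^ m := hdist
      _ < δ := by rw [div_lt_iff₀ hbm]; linarith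
  · calc M * ‖z - z₀‖ ≤ M * (K / b ^ m) := by gcongr
      _ < C * a ^ m := by rw [← mul_div_assoc, div_lt_iff₀ hbm]; linarith
      _ ≤ ‖f z - f z₀‖ := hval

theorem weierstrass_function_general (a : ℝ) (ha₀ : 0 < a) (ha₁ : a < 1)
    (b : ℕ) (hb_odd : Odd b)
    (hab : 1 + 3 * Real.pi / 2 < a * b) :
    let g : ℂ → ℂ := fun z => ∑' n : ℕ, (a : ℂ) ^ n * z ^ (b ^ n)
    ContinuousOn g (Metric.closedBall 0 1) ∧
      DifferentiableOn ℂ g (Metric.ball 0 1) ∧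
      ∀ z₀ ∈ Metric.sphere (0:ℂ) 1, HasInfDiffQuot g (Metric.sphere 0 1) z₀ := by
  intro g
  have hc : ‖(a : ℂ)‖ < 1 := by rwa [norm_real, Real.norm_of_nonneg ha₀.le]
  have hab₁ : 1 < a * b := by linarith [Real.pi_pos]
  have hb : (1 : ℝ) < b := by nlinarith [(Nat.cast_nonneg b : (0 : ℝ) ≤ b)]
  have hC : 0 < 1 - 3 * π / 2 / (a * b - 1) := by
    rw [sub_pos, div_lt_one (by linarith)]
    linarith
  refine ⟨continuousOn_weierstrassSeries b hc, differentiableOn_weierstrassSeries b hc,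
    fun z₀ hz₀ => hasInfDiffQuot_of_geometric (K := 3 * π / 2) hb hab₁ hC fun m => ?_⟩
  exact exists_near_norm_weierstrassSeries_sub_ge ha₀ ha₁ hb_odd hab₁
    (mem_sphere_zero_iff_norm.mp hz₀) m

/-- The complexified Weierstrass function `g z = Σ aⁿ z^(bⁿ)`, for `0 < a < 1`, `b` an odd
positive integer and `a b > 1 + 3π/2`, is continuous on the closed unit disc, holomorphic on
the open unit disc, and has infinite difference quotients at every point of the unit circle
along the unit circle. -/
theorem weierstrass_function (a : ℝ) (ha₀ : 0 < a) (ha₁ : a < 1)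
    (b : ℕ) (hb_odd : Odd b) (hb_pos : 0 < b)
    (hab : 1 + 3 * Real.pi / 2 < a * b) :
    let g : ℂ → ℂ := fun z => ∑' n : ℕ, (a : ℂ) ^ n * z ^ (b ^ n)
    ContinuousOn g (Metric.closedBall 0 1) ∧
      DifferentiableOn ℂ g (Metric.ball 0 1) ∧
      ∀ z₀ ∈ Metric.sphere (0:ℂ) 1, HasInfDiffQuot g (Metric.sphere 0 1) z₀ :=
  weierstrass_function_general a ha₀ ha₁ b hb_odd hab
end

section
/- Let U ⊆ ℂ be open, let φ : U → ℂ be holomorphic and injective, and let J ⊆ U be a compact set. Let f : ℂ → ℂ have infinite difference quotients at every point of J along J. Define h on φ(J) by h(φ(z)) = f(z) for z ∈ J (well-defined since φ is injective). Then h has infinite difference quotients at every point of φ(J) along φ(J). -/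
open Filter Topology Set Asymptotics

theorem hasInfDiffQuot_iff_frequently {f : ℂ → ℂ} {J : Set ℂ} {z₀ : ℂ} :
    HasInfDiffQuot f J z₀ ↔
      ∀ M > (0:ℝ), ∃ᶠ z in 𝓝[J \ {z₀}] z₀, M * ‖z - z₀‖ < ‖f z - f z₀‖ := by
  simp only [(Metric.nhdsWithin_basis_ball).frequently_iff, HasInfDiffQuot, mem_inter_iff,
    Metric.mem_ball, dist_eq_norm, Set.mem_sdiff, mem_singleton_iff, norm_pos_iff, sub_ne_zero]
  grind

theorem HasInfDiffQuot.image {φ f h : ℂ → ℂ} {J : Set ℂ} {z₀ : ℂ} (hz₀ : z₀ ∈ J)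
    (hf : HasInfDiffQuot f J z₀) (hφJ : InjOn φ J)
    (hφ : (fun z ↦ φ z - φ z₀) =O[𝓝 z₀] fun z ↦ z - z₀) (hh : ∀ z ∈ J, h (φ z) = f z) :
    HasInfDiffQuot h (φ '' J) (φ z₀) := by
  rw [hasInfDiffQuot_iff_frequently] at hf ⊢
  intro M hM
  obtain ⟨C, hC, hCφ⟩ := hφ.exists_pos
  have hφcont : Tendsto φ (𝓝 z₀) (𝓝 (φ z₀)) := by
    have := hφ.trans_tendsto (tendsto_sub_nhds_zero_iff.2 tendsto_id)
    exact tendsto_sub_nhds_zero_iff.1 this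
  have hmaps : Tendsto φ (𝓝[J \ {z₀}] z₀) (𝓝[φ '' J \ {φ z₀}] (φ z₀)) :=
    tendsto_nhdsWithin_iff.2 ⟨hφcont.mono_left nhdsWithin_le_nhds,
      eventually_nhdsWithin_of_forall fun z ⟨hzJ, hz⟩ ↦
        ⟨mem_image_of_mem φ hzJ, fun hφz ↦ hz (hφJ hzJ hz₀ hφz)⟩⟩
  have hbound : ∀ᶠ z in 𝓝[J \ {z₀}] z₀, ‖φ z - φ z₀‖ ≤ C * ‖z - z₀‖ ∧ z ∈ J \ {z₀} :=
    (eventually_nhdsWithin_of_eventually_nhds hCφ.bound).and self_mem_nhdsWithin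
  refine hmaps.frequently (((hf (M * C) (mul_pos hM hC)).and_eventually hbound).mono ?_)
  rintro z ⟨hfz, hφz, hzJ, -⟩
  rw [hh z hzJ, hh z₀ hz₀]
  calc M * ‖φ z - φ z₀‖ ≤ M * (C * ‖z - z₀‖) := by gcongr
    _ = M * C * ‖z - z₀‖ := by ring
    _ < ‖f z - f z₀‖ := hfz

theorem transfer_by_conformal_map_general (U : Set ℂ) (hU : IsOpen U)
    (φ : ℂ → ℂ) (hφ : DifferentiableOn ℂ φ U) (hφinj : Set.InjOn φ U)
    (J : Set ℂ) (hJU : J ⊆ U)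
    (f h : ℂ → ℂ) (hf : ∀ z₀ ∈ J, HasInfDiffQuot f J z₀)
    (hh : ∀ z ∈ J, h (φ z) = f z) :
    ∀ w₀ ∈ φ '' J, HasInfDiffQuot h (φ '' J) w₀ := by
  rintro _ ⟨z₀, hz₀, rfl⟩
  have hφz₀ : DifferentiableAt ℂ φ z₀ := hφ.differentiableAt (hU.mem_nhds (hJU hz₀))
  exact (hf z₀ hz₀).image hz₀ (hφinj.mono hJU) hφz₀.hasDerivAt.isBigO_sub hh

/-- Let `φ` be holomorphic and injective on an open set `U`, let `J ⊆ U` be compact, and let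
`f` have infinite difference quotients at every point of `J` along `J`.  If `h` satisfies
`h (φ z) = f z` for `z ∈ J` (a well-posed definition of `h` on `φ '' J` since `φ` is
injective), then `h` has infinite difference quotients at every point of `φ '' J` along
`φ '' J`. -/
theorem transfer_by_conformal_map (U : Set ℂ) (hU : IsOpen U)
    (φ : ℂ → ℂ) (hφ : DifferentiableOn ℂ φ U) (hφinj : Set.InjOn φ U)
    (J : Set ℂ) (hJU : J ⊆ U) (hJcpt : IsCompact J)
    (f h : ℂ → ℂ) (hf : ∀ z₀ ∈ J, HasInfDiffQuot f J z₀)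
    (hh : ∀ z ∈ J, h (φ z) = f z) :
    ∀ w₀ ∈ φ '' J, HasInfDiffQuot h (φ '' J) w₀ :=
  transfer_by_conformal_map_general U hU φ hφ hφinj J hJU f h hf hh
end

section
/- Let D be the open unit disc and Ω = D ∖ [0, 1/2] (the disc with the closed real segment from 0 to 1/2 removed), so that ∂Ω = 𝕋 ∪ [0, 1/2]. Then there is no function f that is continuous on cl(Ω) = cl(D) and holomorphic on Ω and has infinite difference quotients at every point z₀ ∈ ∂Ω along ∂Ω. In fact, every such f is holomorphic on all of D, and consequently for every z₀ ∈ [0, 1/2] the difference quotients of f at z₀ along ∂Ω stay bounded. -/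
open Set Metric Complex intervalIntegral
open scoped Interval

section Topology

variable {X : Type*} [TopologicalSpace X] {U S : Set X}

theorem IsOpen.closure_sdiff_of_interior_eq_empty (hU : IsOpen U) (hS : interior S = ∅) :
    closure (U \ S) = closure U :=
  (closure_mono sdiff_subset).antisymm <| closure_minimal
    ((interior_eq_empty_iff_dense_compl.1 hS).open_subset_closure_inter hU) isClosed_closure

theorem IsOpen.frontier_sdiff_of_interior_eq_empty (hU : IsOpen U) (hS : IsClosed S)
    (hSU : S ⊆ U) (hSi : interior S = ∅) : frontier (U \ S) = frontier U ∪ S := by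
  rw [frontier, frontier, hU.closure_sdiff_of_interior_eq_empty hSi,
    (hU.sdiff hS).interior_eq, hU.interior_eq]
  ext x
  have hx_closure := @subset_closure _ _ U x
  have hx_U := @hSU x
  simp only [mem_sdiff, mem_union]
  tauto

end Topology

theorem DifferentiableAt.exists_norm_sub_le_mul {𝕜 E F : Type*} [NontriviallyNormedField 𝕜]
    [NormedAddCommGroup E] [NormedSpace 𝕜 E] [NormedAddCommGroup F] [NormedSpace 𝕜 F]
    {f : E → F} {x₀ : E} (h : DifferentiableAt 𝕜 f x₀) :
    ∃ M > (0 : ℝ), ∃ δ > (0 : ℝ), ∀ x, ‖x - x₀‖ < δ → ‖f x - f x₀‖ ≤ M * ‖x - x₀‖ := by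
  obtain ⟨M, hM, hMf⟩ := h.isBigO_sub.exists_pos
  obtain ⟨δ, hδ, hδf⟩ := Metric.eventually_nhds_iff.1 hMf.bound
  exact ⟨M, hM, δ, hδ, fun x hx => hδf (by rwa [dist_eq_norm])⟩

theorem not_hasInfDiffQuot_of_le_mul {f : ℂ → ℂ} {J : Set ℂ} {z₀ : ℂ} {M δ : ℝ} (hM : 0 < M)
    (hδ : 0 < δ) (h : ∀ z ∈ J, ‖z - z₀‖ < δ → ‖f z - f z₀‖ ≤ M * ‖z - z₀‖) :
    ¬ HasInfDiffQuot f J z₀ := fun hinf =>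
  let ⟨z, hzJ, _, hzδ, hz⟩ := hinf M hM δ hδ
  (h z hzJ hzδ).not_gt hz

namespace Complex

theorem interior_setOf_im_eq (c : ℝ) : interior {z : ℂ | z.im = c} = ∅ := by
  have : {z : ℂ | z.im = c} = {z | z.im ≤ c} ∩ {z | c ≤ z.im} := by
    ext z
    simp [le_antisymm_iff]
  rw [this, interior_inter, interior_setOfPred_im_le, interior_setOfPred_le_im]
  ext z
  simp only [mem_inter_iff, mem_ofPred_eq, mem_empty_iff_false, iff_false, not_and, not_lt]
  exact le_of_lt

theorem _root_.ContinuousOn.vertical_of_rectangle {X : Type*} [TopologicalSpace X] {f : ℂ → X}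
    {z w : ℂ} (hf : ContinuousOn f (Rectangle z w)) {x : ℝ} (hx : x ∈ [[z.re, w.re]]) :
    ContinuousOn (fun y : ℝ => f (x + y * I)) [[z.im, w.im]] :=
  hf.comp (by fun_prop) fun y hy => by simpa [Rectangle, mem_reProdIm] using ⟨hx, hy⟩

variable {E : Type*} [NormedAddCommGroup E] [NormedSpace ℂ E] {f : ℂ → E} {z w : ℂ} {c : ℝ}

theorem wedgeIntegral_add_wedgeIntegral_eq_add_of_mem_uIcc
    (hc : c ∈ [[z.im, w.im]]) (hf : ContinuousOn f (Rectangle z w)) :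
    wedgeIntegral z w f + wedgeIntegral w z f =
      (wedgeIntegral z (↑w.re + ↑c * I) f + wedgeIntegral (↑w.re + ↑c * I) z f) +
      (wedgeIntegral (↑z.re + ↑c * I) w f + wedgeIntegral w (↑z.re + ↑c * I) f) := by
  have hint : ∀ x ∈ [[z.re, w.re]], ∀ a ∈ [[z.im, w.im]],
      IntervalIntegrable (fun y : ℝ => f (x + y * I)) MeasureTheory.volume a c :=
    fun x hx a ha =>
      ((hf.vertical_of_rectangle hx).mono (uIcc_subset_uIcc ha hc)).intervalIntegrable
  have hz : z.re ∈ [[z.re, w.re]] := left_mem_uIcc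
  have hw : w.re ∈ [[z.re, w.re]] := right_mem_uIcc
  simp only [wedgeIntegral, add_re, ofReal_re, mul_re, I_re, I_im, ofReal_im, add_im, mul_im]
  simp only [mul_zero, sub_zero, add_zero, mul_one, zero_add]
  rw [← integral_add_adjacent_intervals (hint _ hw _ left_mem_uIcc)
      (hint _ hw _ right_mem_uIcc).symm,
    ← integral_add_adjacent_intervals (hint _ hz _ right_mem_uIcc)
      (hint _ hz _ left_mem_uIcc).symm,
    integral_symm (f := fun x : ℝ => f (x + c * I)) w.re z.re, smul_add, smul_add]
  abel

theorem wedgeIntegral_add_wedgeIntegral_eq_zero_of_notMem_Ioo [CompleteSpace E]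
    (hc : c ∉ Ioo (min z.im w.im) (max z.im w.im)) (hfc : ContinuousOn f (Rectangle z w))
    (hfd : DifferentiableOn ℂ f (Rectangle z w \ {u | u.im = c})) :
    wedgeIntegral z w f + wedgeIntegral w z f = 0 := by
  rw [wedgeIntegral_add_wedgeIntegral_eq]
  refine integral_boundary_rect_eq_zero_of_continuousOn_of_differentiableOn f z w hfc
    (hfd.mono ?_)
  rintro u ⟨hre, him⟩
  exact ⟨⟨Ioo_subset_Icc_self hre, Ioo_subset_Icc_self him⟩,
    fun hu : u.im = c => hc (hu ▸ him)⟩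

theorem isConservativeOn_of_differentiableOn_sdiff_im_eq [CompleteSpace E] {U : Set ℂ}
    (hfc : ContinuousOn f U) (hfd : DifferentiableOn ℂ f (U \ {u | u.im = c})) :
    IsConservativeOn f U := by
  intro z w hzw
  rw [← add_eq_zero_iff_eq_neg]
  have hfd' := hfd.mono (sdiff_subset_sdiff_left hzw)
  by_cases hc : c ∈ Ioo (min z.im w.im) (max z.im w.im)
  · have hc' : c ∈ [[z.im, w.im]] := Ioo_subset_Icc_self hc
    have hsub₁ : Rectangle z (↑w.re + ↑c * I) ⊆ Rectangle z w := fun u hu =>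
      ⟨by simpa using hu.1, uIcc_subset_uIcc_left hc' (by simpa using hu.2)⟩
    have hsub₂ : Rectangle (↑z.re + ↑c * I) w ⊆ Rectangle z w := fun u hu =>
      ⟨by simpa using hu.1, uIcc_subset_uIcc_right hc' (by simpa using hu.2)⟩
    have hc₁ : c ∉ Ioo (min z.im c) (max z.im c) := by
      rcases le_total z.im c with h | h <;> simp [h]
    have hc₂ : c ∉ Ioo (min c w.im) (max c w.im) := by
      rcases le_total c w.im with h | h <;> simp [h]
    rw [wedgeIntegral_add_wedgeIntegral_eq_add_of_mem_uIcc hc' (hfc.mono hzw),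
      wedgeIntegral_add_wedgeIntegral_eq_zero_of_notMem_Ioo (by simpa using hc₁)
        ((hfc.mono hzw).mono hsub₁) (hfd'.mono (sdiff_subset_sdiff_left hsub₁)),
      wedgeIntegral_add_wedgeIntegral_eq_zero_of_notMem_Ioo (by simpa using hc₂)
        ((hfc.mono hzw).mono hsub₂) (hfd'.mono (sdiff_subset_sdiff_left hsub₂)), add_zero]
  · exact wedgeIntegral_add_wedgeIntegral_eq_zero_of_notMem_Ioo hc (hfc.mono hzw) hfd'

theorem differentiableOn_of_differentiableOn_sdiff_im_eq [CompleteSpace E] {U : Set ℂ}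
    (hU : IsOpen U) (hfc : ContinuousOn f U) (hfd : DifferentiableOn ℂ f (U \ {u | u.im = c})) :
    DifferentiableOn ℂ f U :=
  (isConservativeOn_and_continuousOn_iff_isDifferentiableOn hU).1
    ⟨isConservativeOn_of_differentiableOn_sdiff_im_eq hfc hfd, hfc⟩

end Complex

/-- For `Ω = D \ [0, 1/2]` one has `cl Ω = cl D` and `∂Ω = 𝕋 ∪ [0, 1/2]`, and every function
continuous on `cl D` and holomorphic on `Ω` is in fact holomorphic on all of `D`; hence its
difference quotients along `∂Ω` stay bounded at each point of `[0, 1/2]`, and no such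
function has infinite difference quotients at every point of `∂Ω` along `∂Ω`. -/
theorem slit_disc_empty :
    let seg : Set ℂ := {z | z.im = 0 ∧ 0 ≤ z.re ∧ z.re ≤ 1 / 2}
    let Ω : Set ℂ := Metric.ball 0 1 \ seg
    let L : Set ℂ := Metric.sphere 0 1 ∪ seg
    closure Ω = Metric.closedBall 0 1 ∧ frontier Ω = L ∧
      ∀ f : ℂ → ℂ, ContinuousOn f (Metric.closedBall 0 1) → DifferentiableOn ℂ f Ω →
        DifferentiableOn ℂ f (Metric.ball 0 1) ∧
        (∀ z₀ ∈ seg, ∃ M > (0:ℝ), ∃ δ > (0:ℝ), ∀ z ∈ L,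
          ‖z - z₀‖ < δ →
            ‖f z - f z₀‖ ≤ M * ‖z - z₀‖) ∧
        ¬ (∀ z₀ ∈ L, HasInfDiffQuot f L z₀) := by
  intro seg Ω L
  have hseg_line : seg ⊆ {z | z.im = 0} := fun z hz => hz.1
  have hseg_closed : IsClosed seg :=
    (isClosed_eq continuous_im continuous_const).inter <|
      (isClosed_le continuous_const continuous_re).inter <|
        isClosed_le continuous_re continuous_const
  have hseg_ball : seg ⊆ ball 0 1 := fun z ⟨him, hre₀, hre⟩ => by
    rw [mem_ball_zero_iff]
    calc ‖z‖ ≤ |z.re| + |z.im| := norm_le_abs_re_add_abs_im z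
      _ < 1 := by rw [him, abs_of_nonneg hre₀]; norm_num; linarith
  have hseg_interior : interior seg = ∅ :=
    subset_empty_iff.1 ((interior_mono hseg_line).trans (interior_setOf_im_eq 0).subset)
  refine ⟨(isOpen_ball.closure_sdiff_of_interior_eq_empty hseg_interior).trans
      (closure_ball 0 one_ne_zero),
    (isOpen_ball.frontier_sdiff_of_interior_eq_empty hseg_closed hseg_ball hseg_interior).trans
      (by rw [frontier_ball 0 one_ne_zero]), fun f hfc hfd => ?_⟩
  have hdiff : DifferentiableOn ℂ f (ball 0 1) :=
    differentiableOn_of_differentiableOn_sdiff_im_eq isOpen_ball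
      (hfc.mono ball_subset_closedBall) (hfd.mono (sdiff_subset_sdiff_right hseg_line))
  have hbound : ∀ z₀ ∈ seg, ∃ M > (0:ℝ), ∃ δ > (0:ℝ), ∀ z ∈ L,
      ‖z - z₀‖ < δ → ‖f z - f z₀‖ ≤ M * ‖z - z₀‖ := fun z₀ hz₀ => by
    obtain ⟨M, hM, δ, hδ, h⟩ :=
      (hdiff.differentiableAt (isOpen_ball.mem_nhds (hseg_ball hz₀))).exists_norm_sub_le_mul
    exact ⟨M, hM, δ, hδ, fun z _ => h z⟩
  have h₀ : (0 : ℂ) ∈ seg := by norm_num [seg]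
  obtain ⟨M, hM, δ, hδ, hbound₀⟩ := hbound 0 h₀
  exact ⟨hdiff, hbound, fun hinf =>
    not_hasInfDiffQuot_of_le_mul hM hδ hbound₀ (hinf 0 (Or.inr h₀))⟩
end
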